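/- arXiv:2306.09555 — 2 statements merged into one kernel-verified Lean document; each statement's English description precedes it below -/
import Mathlib

section
/- Define, for a sequence of functions q_t^i : ℝ^p → ℝ (i = 1,…,t) and Q_t(θ) = min_{1 ≤ i ≤ t} q_t^i(θ), the living zones Z_t^i = {θ : Q_t(θ) = q_t^i(θ)}, where q_{t+1}^i(θ) = q_t^i(θ) + Ω(θ, y_{t+1}) for i ≤ t and q_{t+1}^{t+1}(θ) = (min_θ Q_t(θ)) + β + Ω(θ, y_{t+1}). Then for each fixed i, the sequence (Z_t^i)_{t ≥ i} is nested: Z_{t+1}^i ⊆ Z_t^i. -/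
/-- Nestedness of the living zones: with `Q_t = min_{1 ≤ i ≤ t} q_t^i`,
`q_{t+1}^i = q_t^i + Ω(·, y_{t+1})` for `i ≤ t` and
`q_{t+1}^{t+1} = Q̂_t + β + Ω(·, y_{t+1})` (with `Q̂_t = inf_θ Q_t θ`),
the living zone `Z_{t+1}^i` is included in `Z_t^i`. -/
theorem stmt_6 {p : ℕ} (Ω : ℕ → EuclideanSpace ℝ (Fin p) → ℝ) (β : ℝ)
    (q : ℕ → ℕ → EuclideanSpace ℝ (Fin p) → ℝ)
    (Q : ℕ → EuclideanSpace ℝ (Fin p) → ℝ) (Qhat : ℕ → ℝ)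
    (hQ : ∀ t, 1 ≤ t → ∀ θ,
      IsLeast {v | ∃ i, 1 ≤ i ∧ i ≤ t ∧ v = q t i θ} (Q t θ))
    (hQhat : ∀ t, 1 ≤ t → IsGLB (Set.range (Q t)) (Qhat t))
    (hrec : ∀ t i, 1 ≤ i → i ≤ t → ∀ θ, q (t + 1) i θ = q t i θ + Ω (t + 1) θ)
    (hnew : ∀ t, ∀ θ, q (t + 1) (t + 1) θ = Qhat t + β + Ω (t + 1) θ) :
    ∀ t i, 1 ≤ i → i ≤ t →
      {θ | Q (t + 1) θ = q (t + 1) i θ} ⊆ {θ | Q t θ = q t i θ} := by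
  intro t i hi hit θ hθ
  simp only [Set.mem_setOf_eq] at hθ ⊢
  have hle : ∀ j, 1 ≤ j → j ≤ t → q t i θ ≤ q t j θ := by
    intro j hj hjt
    have h1 : Q (t + 1) θ ≤ q (t + 1) j θ :=
      (hQ (t + 1) (by omega) θ).2 ⟨j, hj, by omega, rfl⟩
    rw [hθ, hrec t i hi hit θ, hrec t j hj hjt θ] at h1
    linarith
  obtain ⟨⟨j0, hj0, hj0t, hQeq⟩, hlb⟩ := hQ t (by omega) θ
  have h2 : Q t θ ≤ q t i θ := hlb ⟨i, hi, hit, rfl⟩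
  have h3 : q t i θ ≤ Q t θ := hQeq ▸ hle j0 hj0 hj0t
  linarith
end

section
/- With q_t^i(θ) = Q̂_{i-1} + β + Σ_{j=i}^t Ω(θ, y_j) and Q_t(θ) = min_{1 ≤ i ≤ t} q_t^i(θ), the living zone Z_t^i = {θ : Q_t(θ) = q_t^i(θ)} equals (⋂_{v=i}^t S_v^i) \ (⋃_{u=1}^{i-1} S_i^u), where S_j^i = {θ : Σ_{u=i}^{j-1} Ω(θ, y_u) ≤ Q̂_{j-1} - Q̂_{i-1}} for i < j and S_i^i = ℝ^p. -/
/-- The cost function `q_t^i` of functional pruning. -/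
def fpQ {p : ℕ} (Ω : ℕ → EuclideanSpace ℝ (Fin p) → ℝ) (Qhat : ℕ → ℝ) (β : ℝ)
    (t i : ℕ) (θ : EuclideanSpace ℝ (Fin p)) : ℝ :=
  Qhat (i - 1) + β + ∑ j ∈ Finset.Icc i t, Ω j θ

/-- The S-type set `S_j^i` (for `i = j` the empty sum gives all of `ℝ^p`). -/
def fpS {p : ℕ} (Ω : ℕ → EuclideanSpace ℝ (Fin p) → ℝ) (Qhat : ℕ → ℝ)
    (i j : ℕ) : Set (EuclideanSpace ℝ (Fin p)) :=
  {θ | ∑ u ∈ Finset.Ico i j, Ω u θ ≤ Qhat (j - 1) - Qhat (i - 1)}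

/-- Proposition 1: the living zone `Z_t^i` (the set where `q_t^i` achieves the
minimum, strictly beating past indices) equals the intersection of the future
S-type sets minus the union of the past S-type sets. -/
theorem stmt_7 {p : ℕ} (Ω : ℕ → EuclideanSpace ℝ (Fin p) → ℝ) (Qhat : ℕ → ℝ)
    (β : ℝ) (t i : ℕ) (hi : 1 ≤ i) (hit : i ≤ t) :
    {θ | (∀ u ∈ Finset.Icc i t, fpQ Ω Qhat β t i θ ≤ fpQ Ω Qhat β t u θ) ∧
        ∀ u ∈ Finset.Icc 1 (i - 1), fpQ Ω Qhat β t i θ < fpQ Ω Qhat β t u θ} =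
      (⋂ v ∈ Finset.Icc i t, fpS Ω Qhat i v) \
        (⋃ u ∈ Finset.Icc 1 (i - 1), fpS Ω Qhat u i) := by
  ext θ
  have key : ∀ a b : ℕ, a ≤ b → b ≤ t →
      ∑ j ∈ Finset.Icc a t, Ω j θ
        = ∑ j ∈ Finset.Ico a b, Ω j θ + ∑ j ∈ Finset.Icc b t, Ω j θ := by
    intro a b hab hbt
    rw [← Finset.Ico_add_one_right_eq_Icc, ← Finset.Ico_add_one_right_eq_Icc,
      Finset.sum_Ico_consecutive _ hab (by omega)]
  simp only [Set.mem_setOf_eq, Set.mem_diff, Set.mem_iInter, Set.mem_iUnion,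
    Finset.mem_Icc, fpS, fpQ, not_exists]
  constructor
  · rintro ⟨h1, h2⟩
    constructor
    · intro v hv
      have := h1 v hv
      rw [key i v hv.1 hv.2] at this
      linarith
    · intro u hu huS
      have := h2 u hu
      rw [key u i (by omega) hit] at this
      linarith
  · rintro ⟨h1, h2⟩
    constructor
    · intro v hv
      have := h1 v hv
      rw [key i v hv.1 hv.2]
      linarith
    · intro u hu
      have := h2 u hu
      rw [key u i (by omega) hit]
      simp only [Set.mem_setOf_eq, not_le] at this
      linarith
end
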